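/- arXiv:2509.22300 — 3 statements merged into one kernel-verified Lean document; each statement's English description precedes it below -/
import Mathlib

section
/- Let E be a real Banach space, let a > b > c be real numbers, and set h_prev = a − b and h = b − c. Let z : ℝ → E be three times continuously differentiable on [c, a] with ‖z''(t)‖ ≤ M₂ and ‖z'''(t)‖ ≤ M₃ for all t ∈ [c, a], and let w ≥ 0. Define the history-augmented velocity ũ = −(1 + w) · z'(b) + w · z'(a). Then the local truncation error of the HiGS step satisfies ‖z(c) − (z(b) + h · ũ)‖ ≤ h · |w · h_prev − h/2| · M₂ + (h³/6 + w · h · h_prev²/2) · M₃. -/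
open Set

/-- Fencing lemma with `Icc` derivatives. -/
lemma fence_icc {E : Type*} [NormedAddCommGroup E] [NormedSpace ℝ E]
    {f f' : ℝ → E} {a b : ℝ}
    (hf : ∀ x ∈ Set.Icc a b, HasDerivWithinAt f (f' x) (Set.Icc a b) x)
    {B B' : ℝ → ℝ} (ha : ‖f a‖ ≤ B a) (hB : ∀ x, HasDerivAt B (B' x) x)
    (bound : ∀ x ∈ Set.Ico a b, ‖f' x‖ ≤ B' x) :
    ∀ x ∈ Set.Icc a b, ‖f x‖ ≤ B x := by
  intro x hx
  exact image_norm_le_of_norm_deriv_right_le_deriv_boundary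
    (fun y hy => (hf y hy).continuousWithinAt)
    (fun y hy => (hf y (Set.Ico_subset_Icc_self hy)).mono_of_mem_nhdsWithin
      (Icc_mem_nhdsGE_of_mem hy))
    ha hB bound hx

/-- Local truncation error of one HiGS step: with previous time `a`, current time `b`,
next time `c`, step sizes `hprev = a - b`, `h = b - c`, weight `w ≥ 0`, and the
history-augmented velocity `ũ = -(1 + w) • z' b + w • z' a`, one has
`‖z c - (z b + h • ũ)‖ ≤ h * |w * hprev - h/2| * M₂ + (h³/6 + w * h * hprev²/2) * M₃`. -/
theorem higs_local_truncation_error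
    {E : Type*} [NormedAddCommGroup E] [NormedSpace ℝ E] [CompleteSpace E]
    (a b c hprev h M₂ M₃ w : ℝ) (hab : b < a) (hbc : c < b)
    (hhprev : hprev = a - b) (hh : h = b - c) (hw : 0 ≤ w)
    (z z' z'' z''' : ℝ → E)
    (hz' : ∀ t ∈ Set.Icc c a, HasDerivWithinAt z (z' t) (Set.Icc c a) t)
    (hz'' : ∀ t ∈ Set.Icc c a, HasDerivWithinAt z' (z'' t) (Set.Icc c a) t)
    (hz''' : ∀ t ∈ Set.Icc c a, HasDerivWithinAt z'' (z''' t) (Set.Icc c a) t)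
    (hcont : ContinuousOn z''' (Set.Icc c a))
    (hM₂ : ∀ t ∈ Set.Icc c a, ‖z'' t‖ ≤ M₂)
    (hM₃ : ∀ t ∈ Set.Icc c a, ‖z''' t‖ ≤ M₃)
    (u : E) (hu : u = -((1 + w) • z' b) + w • z' a) :
    ‖z c - (z b + h • u)‖ ≤
      h * |w * hprev - h / 2| * M₂ + (h ^ 3 / 6 + w * h * hprev ^ 2 / 2) * M₃ := by
  have hca : c < a := hbc.trans hab
  have hbmem : b ∈ Set.Icc c a := ⟨hbc.le, hab.le⟩
  have hh0 : 0 < h := by rw [hh]; linarith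
  have hhprev0 : 0 < hprev := by rw [hhprev]; linarith
  have hM3 : 0 ≤ M₃ := le_trans (norm_nonneg _) (hM₃ c ⟨le_rfl, hca.le⟩)
  -- the function F for the second-order Taylor remainder of z at b around c... (backward trick)
  set F : ℝ → E := fun s => z c - z s - (c - s) • z' s - ((c - s) ^ 2 / 2) • z'' s with hFdef
  have hF : ∀ t ∈ Set.Icc c a,
      HasDerivWithinAt F (-(((c - t) ^ 2 / 2) • z''' t)) (Set.Icc c a) t := by
    intro t ht
    have h1 : HasDerivWithinAt (fun s : ℝ => c - s) (-1) (Set.Icc c a) t := by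
      simpa using (hasDerivWithinAt_id t (Set.Icc c a)).const_sub c
    have h2 : HasDerivWithinAt (fun s : ℝ => (c - s) ^ 2 / 2) (t - c) (Set.Icc c a) t := by
      convert (h1.pow 2).div_const 2 using 1
      · rfl
      · rfl
      · rfl
      ring
    have hA : HasDerivWithinAt (fun s => z c - z s) (0 - z' t) (Set.Icc c a) t :=
      (hasDerivWithinAt_const t _ (z c)).sub (hz' t ht)
    have hB : HasDerivWithinAt (fun s => (c - s) • z' s)
        ((c - t) • z'' t + (-1 : ℝ) • z' t) (Set.Icc c a) t := h1.smul (hz'' t ht)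
    have hC : HasDerivWithinAt (fun s => ((c - s) ^ 2 / 2) • z'' s)
        (((c - t) ^ 2 / 2) • z''' t + (t - c) • z'' t) (Set.Icc c a) t :=
      h2.smul (hz''' t ht)
    have := (hA.sub hB).sub hC
    convert this using 1
    · rfl
    module
  have hFb : ‖F b‖ ≤ M₃ * (b - c) ^ 3 / 6 := by
    have key := fence_icc (f := F) (f' := fun t => -(((c - t) ^ 2 / 2) • z''' t))
      (a := c) (b := b)
      (fun x hx => (hF x ⟨hx.1, hx.2.trans hab.le⟩).mono (Set.Icc_subset_Icc_right hab.le))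
      (B := fun t => M₃ * (t - c) ^ 3 / 6) (B' := fun t => M₃ * (t - c) ^ 2 / 2)
      (by simp [hFdef])
      (fun x => by
        have : HasDerivAt (fun t : ℝ => M₃ * (t - c) ^ 3 / 6)
            (M₃ * (3 * (x - c) ^ 2 * 1) / 6) x :=
          ((((hasDerivAt_id x).sub_const c).pow 3).const_mul M₃).div_const 6
        convert this using 1; ring)
      (fun x hx => by
        have hxm : x ∈ Set.Icc c a := ⟨hx.1, hx.2.le.trans hab.le⟩
        have : ‖-(((c - x) ^ 2 / 2) • z''' x)‖ = (x - c) ^ 2 / 2 * ‖z''' x‖ := by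
          rw [norm_neg, norm_smul, Real.norm_eq_abs]
          congr 1
          rw [abs_of_nonneg (by positivity)]
          ring
        rw [this]
        have := hM₃ x hxm
        nlinarith [norm_nonneg (z''' x), sub_nonneg.mpr hx.1])
    exact key b ⟨hbc.le, le_rfl⟩
  -- first-order Taylor remainder of z' at a around b
  set G : ℝ → E := fun s => z' s - z' b - (s - b) • z'' b with hGdef
  have hG : ∀ t ∈ Set.Icc b a,
      HasDerivWithinAt G (z'' t - z'' b) (Set.Icc b a) t := by
    intro t ht
    have htm : t ∈ Set.Icc c a := ⟨hbc.le.trans ht.1, ht.2⟩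
    have h1 : HasDerivWithinAt (fun s : ℝ => (s - b) • z'' b) ((1 : ℝ) • z'' b)
        (Set.Icc b a) t :=
      (((hasDerivWithinAt_id t _).sub_const b)).smul_const (z'' b)
    have := (((hz'' t htm).mono (Set.Icc_subset_Icc_left hbc.le)).sub
      (hasDerivWithinAt_const t _ (z' b))).sub h1
    convert this using 1
    · rfl
    module
  have hGa : ‖G a‖ ≤ M₃ * (a - b) ^ 2 / 2 := by
    have hz''b : ∀ x ∈ Set.Icc b a, ‖z'' x - z'' b‖ ≤ M₃ * (x - b) := by
      have := norm_image_sub_le_of_norm_deriv_le_segment'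
        (f := z'') (f' := z''') (a := b) (b := a)
        (fun x hx => (hz''' x ⟨hbc.le.trans hx.1, hx.2⟩).mono (Set.Icc_subset_Icc_left hbc.le))
        (C := M₃) (fun x hx => hM₃ x ⟨hbc.le.trans hx.1, hx.2.le⟩)
      intro x hx
      simpa [mul_comm] using this x hx
    have key := fence_icc (f := G) (f' := fun t => z'' t - z'' b) (a := b) (b := a) hG
      (B := fun t => M₃ * (t - b) ^ 2 / 2) (B' := fun t => M₃ * (t - b))
      (by simp [hGdef])
      (fun x => by
        have : HasDerivAt (fun t : ℝ => M₃ * (t - b) ^ 2 / 2)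
            (M₃ * (2 * (x - b) ^ 1 * 1) / 2) x :=
          ((((hasDerivAt_id x).sub_const b).pow 2).const_mul M₃).div_const 2
        convert this using 1; ring)
      (fun x hx => hz''b x (Set.Ico_subset_Icc_self hx))
    exact key a ⟨hab.le, le_rfl⟩
  -- decompose the truncation error
  have hdecomp : z c - (z b + h • u) =
      (h ^ 2 / 2 - w * h * hprev) • z'' b + F b - (w * h) • G a := by
    subst hu hh hhprev
    simp only [hFdef, hGdef]
    module
  rw [hdecomp]
  have t1 : ‖(h ^ 2 / 2 - w * h * hprev) • z'' b‖ ≤ h * |w * hprev - h / 2| * M₂ := by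
    rw [norm_smul, Real.norm_eq_abs]
    have habs : |h ^ 2 / 2 - w * h * hprev| = h * |w * hprev - h / 2| := by
      rw [← abs_of_pos hh0, ← abs_mul, abs_of_pos hh0]
      rw [abs_sub_comm]
      congr 1
      ring
    rw [habs]
    exact mul_le_mul_of_nonneg_left (hM₂ b hbmem) (by positivity)
  have t2 : ‖(w * h) • G a‖ ≤ w * h * (M₃ * hprev ^ 2 / 2) := by
    rw [norm_smul, Real.norm_eq_abs, abs_of_nonneg (by positivity)]
    apply mul_le_mul_of_nonneg_left _ (by positivity)
    rw [hhprev]; exact hGa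
  have t3 : ‖F b‖ ≤ M₃ * h ^ 3 / 6 := by rw [hh]; exact hFb
  calc ‖(h ^ 2 / 2 - w * h * hprev) • z'' b + F b - (w * h) • G a‖
      ≤ ‖(h ^ 2 / 2 - w * h * hprev) • z'' b + F b‖ + ‖(w * h) • G a‖ := norm_sub_le _ _
    _ ≤ (‖(h ^ 2 / 2 - w * h * hprev) • z'' b‖ + ‖F b‖) + ‖(w * h) • G a‖ := by
        gcongr; exact norm_add_le _ _
    _ ≤ (h * |w * hprev - h / 2| * M₂ + M₃ * h ^ 3 / 6) + w * h * (M₃ * hprev ^ 2 / 2) := by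
        gcongr
    _ = h * |w * hprev - h / 2| * M₂ + (h ^ 3 / 6 + w * h * hprev ^ 2 / 2) * M₃ := by ring
end

section
/- Let E be a real Banach space, let a > b > c be real numbers, and set h_prev = a − b and h = b − c. Let z : ℝ → E be three times continuously differentiable on [c, a] with ‖z'''(t)‖ ≤ M₃ for all t ∈ [c, a]. Choose the weight w = h / (2 · h_prev) and define ũ = −(1 + w) · z'(b) + w · z'(a). Then ‖z(c) − (z(b) + h · ũ)‖ ≤ (h³/6) · M₃ + (h² · h_prev / 4) · M₃. Moreover, if in addition h_prev ≤ A · h for some constant A > 0, then ‖z(c) − (z(b) + h · ũ)‖ ≤ (1/6 + A/4) · M₃ · h³; i.e., with the weight w = h/(2·h_prev) the local truncation error of the HiGS step is of order O(h³), one order better than the Euler step. -/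
open Set

lemma taylor1_fwd {E : Type*} [NormedAddCommGroup E] [NormedSpace ℝ E]
    {p q M : ℝ} (f f' f'' : ℝ → E)
    (hf' : ∀ t ∈ Icc p q, HasDerivWithinAt f (f' t) (Icc p q) t)
    (hf'' : ∀ t ∈ Icc p q, HasDerivWithinAt f' (f'' t) (Icc p q) t)
    (hM : ∀ t ∈ Icc p q, ‖f'' t‖ ≤ M) :
    ∀ t ∈ Icc p q, ‖f t - f p - (t - p) • f' p‖ ≤ M * (t - p) ^ 2 / 2 := by
  intro t ht
  rcases le_or_gt q p with hqp | hpq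
  · have : t = p := le_antisymm (ht.2.trans hqp) ht.1
    subst this
    have hM0 : 0 ≤ M := (norm_nonneg _).trans (hM t ht)
    simp [hM0]
  have hp : p ∈ Icc p q := ⟨le_refl _, hpq.le⟩
  set g : ℝ → E := fun s => f s - f p - (s - p) • f' p with hg
  have hg' : ∀ s ∈ Icc p q, HasDerivWithinAt g (f' s - f' p) (Icc p q) s := by
    intro s hs
    have h1 : HasDerivWithinAt (fun s : ℝ => (s - p) • f' p) ((1 : ℝ) • f' p) (Icc p q) s :=
      ((hasDerivWithinAt_id s _).sub_const p).smul_const (f' p)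
    have h4 := ((hf' s hs).sub_const (f p)).sub (by simpa using h1)
    exact h4
  have hlip : ∀ s ∈ Icc p q, ‖f' s - f' p‖ ≤ M * (s - p) := by
    intro s hs
    have := (convex_Icc p q).norm_image_sub_le_of_norm_hasDerivWithin_le hf'' hM hp hs
    calc ‖f' s - f' p‖ ≤ M * ‖s - p‖ := this
      _ = M * (s - p) := by rw [Real.norm_eq_abs, abs_of_nonneg (by linarith [hs.1])]
  have hgcont : ContinuousOn g (Icc p q) := fun s hs => ((hg' s hs).continuousWithinAt)
  have key := image_norm_le_of_norm_deriv_right_le_deriv_boundary (f' := fun s => f' s - f' p)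
    hgcont
    (fun s hs => (hg' s ⟨hs.1, hs.2.le⟩).mono_of_mem_nhdsWithin (Icc_mem_nhdsGE_of_mem hs))
    (B := fun s => M * (s - p) ^ 2 / 2) (B' := fun s => M * (s - p))
    (by simp [g])
    (fun s => by
      have : HasDerivAt (fun s : ℝ => M * (s - p) ^ 2 / 2) (M * (2 * (s - p) ^ 1 * 1) / 2) s :=
        (((hasDerivAt_id s).sub_const p).pow 2).const_mul M |>.div_const 2
      simpa using this.congr_deriv (by ring))
    (fun s hs => hlip s ⟨hs.1, hs.2.le⟩)
  exact key ht

lemma taylor2_fwd {E : Type*} [NormedAddCommGroup E] [NormedSpace ℝ E]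
    {p q M : ℝ} (f f' f'' f''' : ℝ → E)
    (hf' : ∀ t ∈ Icc p q, HasDerivWithinAt f (f' t) (Icc p q) t)
    (hf'' : ∀ t ∈ Icc p q, HasDerivWithinAt f' (f'' t) (Icc p q) t)
    (hf''' : ∀ t ∈ Icc p q, HasDerivWithinAt f'' (f''' t) (Icc p q) t)
    (hM : ∀ t ∈ Icc p q, ‖f''' t‖ ≤ M) :
    ∀ t ∈ Icc p q,
      ‖f t - f p - (t - p) • f' p - ((t - p) ^ 2 / 2) • f'' p‖ ≤ M * (t - p) ^ 3 / 6 := by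
  intro t ht
  rcases le_or_gt q p with hqp | hpq
  · have : t = p := le_antisymm (ht.2.trans hqp) ht.1
    subst this
    have hM0 : 0 ≤ M := (norm_nonneg _).trans (hM t ht)
    simp [hM0]
  have hp : p ∈ Icc p q := ⟨le_refl _, hpq.le⟩
  set g : ℝ → E := fun s => f s - f p - (s - p) • f' p - ((s - p) ^ 2 / 2) • f'' p with hg
  have hg' : ∀ s ∈ Icc p q,
      HasDerivWithinAt g (f' s - f' p - (s - p) • f'' p) (Icc p q) s := by
    intro s hs
    have h1 : HasDerivWithinAt (fun s : ℝ => (s - p) • f' p) ((1 : ℝ) • f' p) (Icc p q) s :=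
      ((hasDerivWithinAt_id s _).sub_const p).smul_const (f' p)
    have h2 : HasDerivWithinAt (fun s : ℝ => ((s - p) ^ 2 / 2) • f'' p)
        ((2 * (s - p) ^ 1 * 1 / 2) • f'' p) (Icc p q) s := by
      have : HasDerivWithinAt (fun s : ℝ => (s - p) ^ 2 / 2) (2 * (s - p) ^ 1 * 1 / 2)
          (Icc p q) s := (((hasDerivWithinAt_id s _).sub_const p).pow 2).div_const 2
      exact this.smul_const (f'' p)
    have h3 := (((hf' s hs).sub_const (f p)).sub (by simpa using h1)).sub h2
    refine h3.congr_deriv ?_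
    have : (2 * (s - p) ^ 1 * 1 / 2 : ℝ) = s - p := by ring
    rw [this]
  have hquad : ∀ s ∈ Icc p q, ‖f' s - f' p - (s - p) • f'' p‖ ≤ M * (s - p) ^ 2 / 2 :=
    taylor1_fwd f' f'' f''' hf'' hf''' hM
  have hgcont : ContinuousOn g (Icc p q) := fun s hs => ((hg' s hs).continuousWithinAt)
  have key := image_norm_le_of_norm_deriv_right_le_deriv_boundary
    (f' := fun s => f' s - f' p - (s - p) • f'' p)
    hgcont
    (fun s hs => (hg' s ⟨hs.1, hs.2.le⟩).mono_of_mem_nhdsWithin (Icc_mem_nhdsGE_of_mem hs))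
    (B := fun s => M * (s - p) ^ 3 / 6) (B' := fun s => M * (s - p) ^ 2 / 2)
    (by simp [g])
    (fun s => by
      have : HasDerivAt (fun s : ℝ => M * (s - p) ^ 3 / 6) (M * (3 * (s - p) ^ 2 * 1) / 6) s :=
        (((hasDerivAt_id s).sub_const p).pow 3).const_mul M |>.div_const 6
      simpa using this.congr_deriv (by ring))
    (fun s hs => hquad s ⟨hs.1, hs.2.le⟩)
  exact key ht

/-- Local truncation error of one HiGS step with the optimal weight `w = h / (2 * hprev)`:
`‖z c - (z b + h • ũ)‖ ≤ (h³/6) * M₃ + (h² * hprev / 4) * M₃`; moreover if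
`hprev ≤ A * h` for some `A > 0`, then the error is at most `(1/6 + A/4) * M₃ * h³`,
i.e. of order `O(h³)`. -/
theorem higs_local_truncation_error_optimal_weight
    {E : Type*} [NormedAddCommGroup E] [NormedSpace ℝ E] [CompleteSpace E]
    (a b c hprev h M₃ w : ℝ) (hab : b < a) (hbc : c < b)
    (hhprev : hprev = a - b) (hh : h = b - c) (hw : w = h / (2 * hprev))
    (z z' z'' z''' : ℝ → E)
    (hz' : ∀ t ∈ Set.Icc c a, HasDerivWithinAt z (z' t) (Set.Icc c a) t)
    (hz'' : ∀ t ∈ Set.Icc c a, HasDerivWithinAt z' (z'' t) (Set.Icc c a) t)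
    (hz''' : ∀ t ∈ Set.Icc c a, HasDerivWithinAt z'' (z''' t) (Set.Icc c a) t)
    (hcont : ContinuousOn z''' (Set.Icc c a))
    (hM₃ : ∀ t ∈ Set.Icc c a, ‖z''' t‖ ≤ M₃)
    (u : E) (hu : u = -((1 + w) • z' b) + w • z' a) :
    ‖z c - (z b + h • u)‖ ≤ h ^ 3 / 6 * M₃ + h ^ 2 * hprev / 4 * M₃ ∧
    ∀ A : ℝ, 0 < A → hprev ≤ A * h →
      ‖z c - (z b + h • u)‖ ≤ (1 / 6 + A / 4) * M₃ * h ^ 3 := by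
  have hca : c < a := hbc.trans hab
  have hb : b ∈ Icc c a := ⟨hbc.le, hab.le⟩
  have hM0 : 0 ≤ M₃ := (norm_nonneg _).trans (hM₃ b hb)
  have hh0 : 0 < h := by rw [hh]; linarith
  have hp0 : 0 < hprev := by rw [hhprev]; linarith
  have hw0 : 0 ≤ w := by rw [hw]; positivity
  -- Estimate E2 on [b, a]
  have hsub_ba : Icc b a ⊆ Icc c a := Icc_subset_Icc hbc.le le_rfl
  have hE2 : ‖z' a - z' b - (a - b) • z'' b‖ ≤ M₃ * (a - b) ^ 2 / 2 := by
    have := taylor1_fwd (p := b) (q := a) z' z'' z'''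
      (fun t ht => (hz'' t (hsub_ba ht)).mono hsub_ba)
      (fun t ht => (hz''' t (hsub_ba ht)).mono hsub_ba)
      (fun t ht => hM₃ t (hsub_ba ht))
    exact this a ⟨hab.le, le_rfl⟩
  -- Estimate E1 on [c, b] via reflection s ↦ c + b - s
  have hsub_cb : Icc c b ⊆ Icc c a := Icc_subset_Icc le_rfl hab.le
  have hmap : MapsTo (fun s : ℝ => c + b - s) (Icc c b) (Icc c b) := by
    intro s hs
    simp only [mem_Icc] at hs ⊢
    constructor <;> linarith [hs.1, hs.2]
  have hσ : ∀ s : ℝ, HasDerivWithinAt (fun s : ℝ => c + b - s) (-1 : ℝ) (Icc c b) s := by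
    intro s
    exact ((hasDerivWithinAt_const s (Icc c b) (c + b)).sub
      (hasDerivWithinAt_id s (Icc c b))).congr_deriv (by norm_num)
  have refl_deriv : ∀ (F F' : ℝ → E),
      (∀ t ∈ Icc c a, HasDerivWithinAt F (F' t) (Icc c a) t) →
      ∀ s ∈ Icc c b, HasDerivWithinAt (fun s => F (c + b - s))
        ((-1 : ℝ) • F' (c + b - s)) (Icc c b) s := by
    intro F F' hF s hs
    exact ((hF (c + b - s) (hsub_cb (hmap hs))).mono hsub_cb).scomp s (hσ s) hmap
  have hE1 : ‖z c - z b - (b - c) • (-(z' b)) - ((b - c) ^ 2 / 2) • z'' b‖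
      ≤ M₃ * (b - c) ^ 3 / 6 := by
    have key := taylor2_fwd (p := c) (q := b)
      (fun s => z (c + b - s)) (fun s => (-1 : ℝ) • z' (c + b - s))
      (fun s => z'' (c + b - s)) (fun s => (-1 : ℝ) • z''' (c + b - s))
      (refl_deriv z z' hz')
      (fun s hs => by
        have := refl_deriv z' z'' hz'' s hs
        exact (this.const_smul (-1 : ℝ)).congr_deriv (by simp))
      (fun s hs => refl_deriv z'' z''' hz''' s hs)
      (fun s hs => by
        simpa using hM₃ (c + b - s) (hsub_cb (hmap hs)))
    have := key b ⟨hbc.le, le_rfl⟩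
    simpa using this
  -- Algebraic identity
  set E1 : E := z c - z b - (b - c) • (-(z' b)) - ((b - c) ^ 2 / 2) • z'' b with hE1def
  set E2 : E := z' a - z' b - (a - b) • z'' b with hE2def
  have hpne : hprev ≠ 0 := ne_of_gt hp0
  have hid : z c - (z b + h • u) = E1 - (h * w) • E2 := by
    rw [hu, hE1def, hE2def]
    have hcoef : h * w * (a - b) = (b - c) ^ 2 / 2 := by
      rw [hw, hh, hhprev] at *
      field_simp
    rw [hh] at hcoef ⊢
    match_scalars
    all_goals try ring
    all_goals linear_combination -hcoef
  have herr : ‖z c - (z b + h • u)‖ ≤ h ^ 3 / 6 * M₃ + h ^ 2 * hprev / 4 * M₃ := by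
    rw [hid]
    have h1 : ‖E1 - (h * w) • E2‖ ≤ ‖E1‖ + ‖(h * w) • E2‖ := norm_sub_le _ _
    have h2 : ‖(h * w) • E2‖ = (h * w) * ‖E2‖ := by
      rw [norm_smul, Real.norm_eq_abs, abs_of_nonneg (by positivity)]
    have hE1' : ‖E1‖ ≤ M₃ * (b - c) ^ 3 / 6 := hE1
    have hE2' : ‖E2‖ ≤ M₃ * (a - b) ^ 2 / 2 := hE2
    have hwv : h * w = h ^ 2 / (2 * hprev) := by rw [hw]; ring
    have hfin : h * w * (M₃ * (a - b) ^ 2 / 2) = h ^ 2 * hprev / 4 * M₃ := by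
      rw [hwv, ← hhprev]
      field_simp
      ring
    calc ‖E1 - (h * w) • E2‖ ≤ ‖E1‖ + (h * w) * ‖E2‖ := by rw [← h2]; exact h1
      _ ≤ M₃ * (b - c) ^ 3 / 6 + h * w * (M₃ * (a - b) ^ 2 / 2) := by
          refine add_le_add hE1' (mul_le_mul_of_nonneg_left hE2' (by positivity))
      _ = h ^ 3 / 6 * M₃ + h ^ 2 * hprev / 4 * M₃ := by rw [hfin, hh]; ring
  refine ⟨herr, fun A hA hAh => ?_⟩
  have key : h ^ 2 * hprev / 4 * M₃ ≤ A / 4 * M₃ * h ^ 3 := by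
    have h1 : h ^ 2 * M₃ / 4 * hprev ≤ h ^ 2 * M₃ / 4 * (A * h) :=
      mul_le_mul_of_nonneg_left hAh (by positivity)
    nlinarith [h1]
  have hring : (1 / 6 + A / 4) * M₃ * h ^ 3 = h ^ 3 / 6 * M₃ + A / 4 * M₃ * h ^ 3 := by ring
  rw [hring]
  linarith [herr, key]
end

section
/- Let E be a real Banach space and u : E × ℝ → E satisfy ‖u(x, t) − u(y, t)‖ ≤ L · ‖x − y‖ for all x, y ∈ E and t ∈ ℝ, with L > 0. Let t₀ > t₁ > ⋯ > t_M be a time grid with step sizes h_k = t_k − t_{k+1} satisfying h_k ≤ h and (1/A) ≤ h_k / h_{k−1} ≤ A for all k and some constant A ≥ 1. Let z : ℝ → E be three times continuously differentiable on [t_M, t₀] with z'(t) = −u(z(t), t), ‖z''(t)‖ ≤ M₂ and ‖z'''(t)‖ ≤ M₃ on [t_M, t₀]. Define the HiGS iterates by ẑ₀ = z(t₀), ẑ₁ = ẑ₀ + h₀ · u(ẑ₀, t₀), and for k ≥ 1, ẑ_{k+1} = ẑ_k + h_k · [(1 + w_k) · u(ẑ_k, t_k) − w_k · u(ẑ_{k−1},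 t_{k−1})] with w_k = h_k / (2 · h_{k−1}). Then there exists a constant C, depending only on L, A, M₂, M₃, and t₀ − t_M, such that ‖ẑ_k − z(t_k)‖ ≤ C · h² for all 0 ≤ k ≤ M; i.e., the global error of the HiGS sampler is of order O(h²). -/
open Set

section Taylor
variable {E : Type*} [NormedAddCommGroup E] [NormedSpace ℝ E]

/-- crude mean value bound -/
lemma higs_mvt {f f' : ℝ → E} {a b : ℝ} {B : ℝ}
    (hf : ∀ s ∈ Icc a b, HasDerivWithinAt f (f' s) (Icc a b) s)
    (hB : ∀ s ∈ Icc a b, ‖f' s‖ ≤ B)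
    {r s : ℝ} (hr : r ∈ Icc a b) (hs : s ∈ Icc a b) :
    ‖f s - f r‖ ≤ B * |s - r| := by
  have := Convex.norm_image_sub_le_of_norm_hasDerivWithin_le hf hB (convex_Icc a b) hr hs
  simpa [Real.norm_eq_abs] using this

/-- crude first-order Taylor bound -/
lemma higs_taylor1 {f f' f'' : ℝ → E} {a b : ℝ} {B : ℝ}
    (hf : ∀ s ∈ Icc a b, HasDerivWithinAt f (f' s) (Icc a b) s)
    (hf' : ∀ s ∈ Icc a b, HasDerivWithinAt f' (f'' s) (Icc a b) s)
    (hB : ∀ s ∈ Icc a b, ‖f'' s‖ ≤ B)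
    {r s : ℝ} (hr : r ∈ Icc a b) (hs : s ∈ Icc a b) :
    ‖f s - f r - (s - r) • f' r‖ ≤ B * |s - r| ^ 2 := by
  have hsub : uIcc r s ⊆ Icc a b := uIcc_subset_Icc hr hs
  have hg : ∀ x ∈ uIcc r s,
      HasDerivWithinAt (fun y => f y - y • f' r) (f' x - f' r) (uIcc r s) x := by
    intro x hx
    have := ((hf x (hsub hx)).mono hsub).sub
      ((hasDerivWithinAt_id x (uIcc r s)).smul_const (f' r))
    rw [one_smul] at this
    exact this
  have hbound : ∀ x ∈ uIcc r s, ‖f' x - f' r‖ ≤ B * |s - r| := by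
    intro x hx
    have h1 : ‖f' x - f' r‖ ≤ B * |x - r| := higs_mvt hf' hB hr (hsub hx)
    have hB0 : 0 ≤ B := le_trans (norm_nonneg _) (hB r hr)
    have h2 : |x - r| ≤ |s - r| := by
      rw [mem_uIcc] at hx
      rcases hx with ⟨h3, h4⟩ | ⟨h3, h4⟩
      · rw [abs_of_nonneg (by linarith : (0:ℝ) ≤ x - r),
          abs_of_nonneg (by linarith : (0:ℝ) ≤ s - r)]; linarith
      · rw [abs_of_nonpos (by linarith : x - r ≤ 0),
          abs_of_nonpos (by linarith : s - r ≤ 0)]; linarith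
    exact h1.trans (by gcongr)
  have := Convex.norm_image_sub_le_of_norm_hasDerivWithin_le hg hbound (convex_uIcc r s)
    left_mem_uIcc right_mem_uIcc
  have h3 : (fun y => f y - y • f' r) s - (fun y => f y - y • f' r) r
      = f s - f r - (s - r) • f' r := by
    simp only [sub_smul]; abel
  rw [h3] at this
  calc ‖f s - f r - (s - r) • f' r‖ ≤ B * |s - r| * ‖s - r‖ := this
    _ = B * |s - r| ^ 2 := by rw [Real.norm_eq_abs]; ring

/-- crude second-order Taylor bound -/
lemma higs_taylor2 {f f' f'' f''' : ℝ → E} {a b : ℝ} {B : ℝ}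
    (hf : ∀ s ∈ Icc a b, HasDerivWithinAt f (f' s) (Icc a b) s)
    (hf' : ∀ s ∈ Icc a b, HasDerivWithinAt f' (f'' s) (Icc a b) s)
    (hf'' : ∀ s ∈ Icc a b, HasDerivWithinAt f'' (f''' s) (Icc a b) s)
    (hB : ∀ s ∈ Icc a b, ‖f''' s‖ ≤ B)
    {r s : ℝ} (hr : r ∈ Icc a b) (hs : s ∈ Icc a b) :
    ‖f s - f r - (s - r) • f' r - ((s - r) ^ 2 / 2) • f'' r‖ ≤ B * |s - r| ^ 3 := by
  have hsub : uIcc r s ⊆ Icc a b := uIcc_subset_Icc hr hs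
  have hg : ∀ x ∈ uIcc r s,
      HasDerivWithinAt (fun y => f y - y • f' r - ((y - r) ^ 2 / 2) • f'' r)
        (f' x - f' r - (x - r) • f'' r) (uIcc r s) x := by
    intro x hx
    have h1 : HasDerivAt (fun y : ℝ => ((y - r) ^ 2 / 2)) (x - r) x := by
      have := (((hasDerivAt_id x).sub_const r).pow 2).div_const 2
      refine this.congr_deriv ?_
      simp only [id]; push_cast; ring
    have := (((hf x (hsub hx)).mono hsub).sub
      ((hasDerivWithinAt_id x (uIcc r s)).smul_const (f' r))).sub
      ((h1.hasDerivWithinAt).smul_const (f'' r))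
    rw [one_smul] at this
    exact this
  have hbound : ∀ x ∈ uIcc r s, ‖f' x - f' r - (x - r) • f'' r‖ ≤ B * |s - r| ^ 2 := by
    intro x hx
    have h1 : ‖f' x - f' r - (x - r) • f'' r‖ ≤ B * |x - r| ^ 2 :=
      higs_taylor1 hf' hf'' hB hr (hsub hx)
    have hB0 : 0 ≤ B := le_trans (norm_nonneg _) (hB r hr)
    have h2 : |x - r| ≤ |s - r| := by
      rw [mem_uIcc] at hx
      rcases hx with ⟨h3, h4⟩ | ⟨h3, h4⟩
      · rw [abs_of_nonneg (by linarith : (0:ℝ) ≤ x - r),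
          abs_of_nonneg (by linarith : (0:ℝ) ≤ s - r)]; linarith
      · rw [abs_of_nonpos (by linarith : x - r ≤ 0),
          abs_of_nonpos (by linarith : s - r ≤ 0)]; linarith
    exact h1.trans (by gcongr)
  have := Convex.norm_image_sub_le_of_norm_hasDerivWithin_le hg hbound (convex_uIcc r s)
    left_mem_uIcc right_mem_uIcc
  have h3 : (fun y => f y - y • f' r - ((y - r) ^ 2 / 2) • f'' r) s
      - (fun y => f y - y • f' r - ((y - r) ^ 2 / 2) • f'' r) r
      = f s - f r - (s - r) • f' r - ((s - r) ^ 2 / 2) • f'' r := by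
    simp only [sub_smul]
    have : ((r - r) ^ 2 / 2) = 0 := by ring
    rw [this, zero_smul]
    abel
  rw [h3] at this
  calc ‖f s - f r - (s - r) • f' r - ((s - r) ^ 2 / 2) • f'' r‖
      ≤ B * |s - r| ^ 2 * ‖s - r‖ := this
    _ = B * |s - r| ^ 3 := by rw [Real.norm_eq_abs]; ring

end Taylor

set_option maxHeartbeats 2000000 in
/-- Global error of the HiGS sampler: for the ODE `z' = -u(z, t)` with `u` `L`-Lipschitz
in the state, a decreasing grid with steps `h_k ≤ h` and bounded step ratios
`1/A ≤ h_k / h_{k-1} ≤ A`, and `‖z''‖ ≤ M₂`, `‖z'''‖ ≤ M₃`, the HiGS iterates (a plain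
Euler first step, then `ẑ_{k+1} = ẑ_k + h_k • ((1 + w_k) • u(ẑ_k, t_k) - w_k • u(ẑ_{k-1}, t_{k-1}))`
with `w_k = h_k / (2 h_{k-1})`) have global error at most `C * h²`, where `C` depends only
on `L`, `A`, `M₂`, `M₃`, and `t₀ - t_M ≤ T`. -/
theorem higs_sampler_global_error
    {E : Type*} [NormedAddCommGroup E] [NormedSpace ℝ E] [CompleteSpace E]
    (L A M₂ M₃ T : ℝ) (hL : 0 < L) (hA : 1 ≤ A) (hM₂ : 0 ≤ M₂) (hM₃ : 0 ≤ M₃) :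
    ∃ C : ℝ, ∀ (M : ℕ) (t : ℕ → ℝ) (h : ℝ) (u : E → ℝ → E)
      (z z' z'' z''' : ℝ → E) (zh : ℕ → E),
      (∀ x y : E, ∀ s : ℝ, ‖u x s - u y s‖ ≤ L * ‖x - y‖) →
      (∀ k < M, t (k + 1) < t k) →
      (∀ k < M, t k - t (k + 1) ≤ h) →
      (∀ k, 1 ≤ k → k < M →
        1 / A ≤ (t k - t (k + 1)) / (t (k - 1) - t k) ∧
        (t k - t (k + 1)) / (t (k - 1) - t k) ≤ A) →
      t 0 - t M ≤ T →
      (∀ s ∈ Set.Icc (t M) (t 0), HasDerivWithinAt z (z' s) (Set.Icc (t M) (t 0)) s) →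
      (∀ s ∈ Set.Icc (t M) (t 0), HasDerivWithinAt z' (z'' s) (Set.Icc (t M) (t 0)) s) →
      (∀ s ∈ Set.Icc (t M) (t 0), HasDerivWithinAt z'' (z''' s) (Set.Icc (t M) (t 0)) s) →
      ContinuousOn z''' (Set.Icc (t M) (t 0)) →
      (∀ s ∈ Set.Icc (t M) (t 0), z' s = -u (z s) s) →
      (∀ s ∈ Set.Icc (t M) (t 0), ‖z'' s‖ ≤ M₂) →
      (∀ s ∈ Set.Icc (t M) (t 0), ‖z''' s‖ ≤ M₃) →
      zh 0 = z (t 0) →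
      (0 < M → zh 1 = zh 0 + (t 0 - t 1) • u (zh 0) (t 0)) →
      (∀ k, 1 ≤ k → k < M →
        zh (k + 1) = zh k + (t k - t (k + 1)) •
          ((1 + (t k - t (k + 1)) / (2 * (t (k - 1) - t k))) • u (zh k) (t k) -
            ((t k - t (k + 1)) / (2 * (t (k - 1) - t k))) • u (zh (k - 1)) (t (k - 1)))) →
      ∀ k ≤ M, ‖zh k - z (t k)‖ ≤ C * h ^ 2 := by
  have hA0 : (0:ℝ) < A := by linarith
  set T' := max T 0 with hT'def
  set c := L * (1 + A) with hcdef
  set K := M₃ * (1 + A ^ 3 / 2) with hKdef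
  have hc0 : 0 ≤ c := by
    have : (0:ℝ) ≤ 1 + A := by linarith
    exact mul_nonneg hL.le this
  have hK0 : 0 ≤ K := by
    have : (0:ℝ) ≤ 1 + A ^ 3 / 2 := by positivity
    exact mul_nonneg hM₃ this
  have hT'0 : 0 ≤ T' := le_max_right T 0
  have hC0 : 0 ≤ (M₂ + K * T') * Real.exp (c * T') :=
    mul_nonneg (add_nonneg hM₂ (mul_nonneg hK0 hT'0)) (Real.exp_nonneg _)
  refine ⟨(M₂ + K * T') * Real.exp (c * T'), ?_⟩
  intro M t h u z z' z'' z''' zh hLip hdec hstepb hratio hT hz hz' hz'' _hz''' huz hM2b hM3b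
    hzh0 hzh1 hzhk
  rcases Nat.eq_zero_or_pos M with hM0 | hMpos
  · intro k hk
    have hk0 : k = 0 := by omega
    subst hk0
    rw [hzh0, sub_self, norm_zero]
    exact mul_nonneg hC0 (sq_nonneg h)
  -- positive number of steps
  have hh0 : 0 < h := lt_of_lt_of_le (by linarith [hdec 0 hMpos]) (hstepb 0 hMpos)
  have tmono : ∀ i j : ℕ, i ≤ j → j ≤ M → t j ≤ t i := by
    intro i j hij
    induction hij with
    | refl => intro _; exact le_rfl
    | @step m hm ih =>
      intro hjM
      exact le_trans (le_of_lt (hdec _ (by omega))) (ih (by omega))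
  have tmem : ∀ k, k ≤ M → t k ∈ Icc (t M) (t 0) := fun k hk =>
    ⟨tmono k M hk le_rfl, tmono 0 k (Nat.zero_le _) hk⟩
  -- one-step recursion bound
  have step : ∀ k, 1 ≤ k → k < M →
      ‖zh (k+1) - z (t (k+1))‖ ≤ (1 + c * (t k - t (k+1))) *
        max ‖zh k - z (t k)‖ ‖zh (k-1) - z (t (k-1))‖ + K * h^2 * (t k - t (k+1)) := by
    intro k hk1 hkM
    have hk' : k - 1 + 1 = k := Nat.succ_pred_eq_of_pos hk1
    have hmem1 := tmem (k+1) hkM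
    have hmemk := tmem k (le_of_lt hkM)
    have hmemk1 := tmem (k-1) (by omega)
    have hdk : t (k+1) < t k := hdec k hkM
    have hdk1 : t k < t (k-1) := by
      have := hdec (k-1) (by omega); rwa [hk'] at this
    have hkpos : 0 < t k - t (k+1) := by linarith
    have hk1pos : 0 < t (k-1) - t k := by linarith
    have hne : t (k-1) - t k ≠ 0 := ne_of_gt hk1pos
    have hhle : t k - t (k+1) ≤ h := hstepb k hkM
    obtain ⟨hrat1, hrat2⟩ := hratio k hk1 hkM
    have hk1le : t (k-1) - t k ≤ A * (t k - t (k+1)) := by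
      rw [div_le_div_iff₀ (by positivity) hk1pos] at hrat1
      nlinarith
    set w := (t k - t (k + 1)) / (2 * (t (k - 1) - t k)) with hwdef
    have hw0 : 0 ≤ w := by positivity
    have hwA : w ≤ A / 2 := by
      have : w = ((t k - t (k+1)) / (t (k-1) - t k)) / 2 := by
        rw [hwdef, div_div, mul_comm]
      rw [this]; linarith
    -- Taylor remainders
    have hRE : ‖z (t (k+1)) - z (t k) - (t (k+1) - t k) • z' (t k)
        - ((t (k+1) - t k)^2/2) • z'' (t k)‖ ≤ M₃ * (t k - t (k+1))^3 := by
      have := higs_taylor2 hz hz' hz'' hM3b hmemk hmem1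
      rwa [show |t (k+1) - t k| = t k - t (k+1) by
        rw [abs_of_nonpos (by linarith), neg_sub]] at this
    have hRD : ‖z' (t (k-1)) - z' (t k) - (t (k-1) - t k) • z'' (t k)‖
        ≤ M₃ * (t (k-1) - t k)^2 := by
      have := higs_taylor1 hz' hz'' hM3b hmemk hmemk1
      rwa [show |t (k-1) - t k| = t (k-1) - t k by
        rw [abs_of_nonneg (by linarith)]] at this
    -- error identity
    have hiden : zh (k+1) - z (t (k+1)) =
        (zh k - z (t k))
        + (t k - t (k+1)) • ((1 + w) • (u (zh k) (t k) - u (z (t k)) (t k))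
            - w • (u (zh (k-1)) (t (k-1)) - u (z (t (k-1))) (t (k-1))))
        + ((t k - t (k+1)) * w) •
            (z' (t (k-1)) - z' (t k) - (t (k-1) - t k) • z'' (t k))
        - (z (t (k+1)) - z (t k) - (t (k+1) - t k) • z' (t k)
            - ((t (k+1) - t k)^2/2) • z'' (t k)) := by
      rw [hwdef, hzhk k hk1 hkM, huz (t k) hmemk, huz (t (k-1)) hmemk1]
      match_scalars <;> field_simp <;> ring
    have hLk : ‖u (zh k) (t k) - u (z (t k)) (t k)‖ ≤ L * ‖zh k - z (t k)‖ := hLip _ _ _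
    have hLk1 : ‖u (zh (k-1)) (t (k-1)) - u (z (t (k-1))) (t (k-1))‖
        ≤ L * ‖zh (k-1) - z (t (k-1))‖ := hLip _ _ _
    set Ek := ‖zh k - z (t k)‖ with hEk
    set Ek1 := ‖zh (k-1) - z (t (k-1))‖ with hEk1
    set mE := max Ek Ek1 with hmE
    have hmE0 : 0 ≤ mE := le_trans (norm_nonneg _) (le_max_left _ _)
    have hEkle : Ek ≤ mE := le_max_left _ _
    have hEk1le : Ek1 ≤ mE := le_max_right _ _
    clear_value w Ek Ek1 mE
    have hk0 : (0:ℝ) ≤ t k - t (k+1) := hkpos.le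
    have n1 : ‖(t k - t (k+1)) • ((1 + w) • (u (zh k) (t k) - u (z (t k)) (t k))
          - w • (u (zh (k-1)) (t (k-1)) - u (z (t (k-1))) (t (k-1))))‖
        ≤ (t k - t (k+1)) * ((1 + w) * (L * Ek) + w * (L * Ek1)) := by
      rw [norm_smul, Real.norm_eq_abs, abs_of_nonneg hk0]
      refine mul_le_mul_of_nonneg_left ?_ hk0
      refine (norm_sub_le _ _).trans ?_
      rw [norm_smul, norm_smul, Real.norm_eq_abs, Real.norm_eq_abs,
        abs_of_nonneg (by linarith : (0:ℝ) ≤ 1 + w), abs_of_nonneg hw0]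
      exact add_le_add (mul_le_mul_of_nonneg_left hLk (by linarith))
        (mul_le_mul_of_nonneg_left hLk1 hw0)
    have n2 : ‖((t k - t (k+1)) * w) •
          (z' (t (k-1)) - z' (t k) - (t (k-1) - t k) • z'' (t k))‖
        ≤ ((t k - t (k+1)) * w) * (M₃ * (t (k-1) - t k)^2) := by
      rw [norm_smul, Real.norm_eq_abs, abs_of_nonneg (mul_nonneg hk0 hw0)]
      exact mul_le_mul_of_nonneg_left hRD (mul_nonneg hk0 hw0)
    have hnorm : ‖zh (k+1) - z (t (k+1))‖ ≤
        Ek + (t k - t (k+1)) * ((1 + w) * (L * Ek) + w * (L * Ek1))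
        + ((t k - t (k+1)) * w) * (M₃ * (t (k-1) - t k)^2)
        + M₃ * (t k - t (k+1))^3 := by
      rw [hiden]
      refine le_trans (norm_sub_le _ _) (add_le_add ?_ hRE)
      refine le_trans (norm_add_le _ _) (add_le_add ?_ n2)
      exact le_trans (norm_add_le _ _) (add_le_add hEk.ge n1)
    refine hnorm.trans ?_
    have h1 : Ek + (t k - t (k+1)) * ((1 + w) * (L * Ek) + w * (L * Ek1))
        ≤ (1 + c * (t k - t (k+1))) * mE := by
      have a1 := mul_le_mul_of_nonneg_left (mul_le_mul_of_nonneg_left hEkle hL.le)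
        (by linarith : (0:ℝ) ≤ 1 + w)
      have a2 := mul_le_mul_of_nonneg_left (mul_le_mul_of_nonneg_left hEk1le hL.le) hw0
      have a3 : (1 + w) * (L * mE) + w * (L * mE) = (1 + 2*w) * (L * mE) := by ring
      have e1 : (1 + w) * (L * Ek) + w * (L * Ek1) ≤ (1 + 2*w) * (L * mE) := by
        linarith
      have e2 : (1 + 2*w) * (L * mE) ≤ (1 + A) * (L * mE) :=
        mul_le_mul_of_nonneg_right (by linarith) (mul_nonneg hL.le hmE0)
      have e3 := mul_le_mul_of_nonneg_left (e1.trans e2) hk0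
      have e4 : (1 + c * (t k - t (k+1))) * mE
          = mE + (t k - t (k+1)) * ((1 + A) * (L * mE)) := by rw [hcdef]; ring
      linarith
    have h2 : ((t k - t (k+1)) * w) * (M₃ * (t (k-1) - t k)^2)
        + M₃ * (t k - t (k+1))^3 ≤ K * h^2 * (t k - t (k+1)) := by
      rw [hKdef]
      have e3 : M₃ * (t (k-1) - t k)^2 ≤ M₃ * (A * (t k - t (k+1)))^2 :=
        mul_le_mul_of_nonneg_left (pow_le_pow_left₀ hk1pos.le hk1le 2) hM₃
      have e4 : ((t k - t (k+1)) * w) * (M₃ * (t (k-1) - t k)^2)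
          ≤ ((t k - t (k+1)) * (A/2)) * (M₃ * (A * (t k - t (k+1)))^2) := by
        refine mul_le_mul (mul_le_mul_of_nonneg_left hwA hk0) e3
          (mul_nonneg hM₃ (sq_nonneg _)) (mul_nonneg hk0 (by linarith))
      have e5 : (t k - t (k+1))^2 ≤ h^2 := pow_le_pow_left₀ hk0 hhle 2
      have e6 : ((t k - t (k+1)) * (A/2)) * (M₃ * (A * (t k - t (k+1)))^2)
          + M₃ * (t k - t (k+1))^3
          = (M₃ * (1 + A^3/2)) * (t k - t (k+1))^2 * (t k - t (k+1)) := by ring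
      have e7 : (M₃ * (1 + A^3/2)) * (t k - t (k+1))^2 * (t k - t (k+1))
          ≤ (M₃ * (1 + A^3/2)) * h^2 * (t k - t (k+1)) := by
        have hc' : (0:ℝ) ≤ M₃ * (1 + A^3/2) := by positivity
        exact mul_le_mul_of_nonneg_right (mul_le_mul_of_nonneg_left e5 hc') hk0
      linarith
    linarith
  -- main induction
  have key : ∀ k, k ≤ M →
      ‖zh k - z (t k)‖ ≤ (M₂ + K * (t 0 - t k)) * Real.exp (c * (t 0 - t k)) * h^2 := by
    intro k
    induction k using Nat.strong_induction_on with
    | _ k ih =>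
      intro hkM
      match k, ih with
      | 0, _ =>
        simp only [hzh0, sub_self, norm_zero, mul_zero, add_zero, Real.exp_zero, mul_one]
        positivity
      | 1, _ =>
        have hmem0 := tmem 0 (Nat.zero_le _)
        have hmem1 := tmem 1 hkM
        have hd0 : t 1 < t 0 := hdec 0 hMpos
        have hiden1 : zh 1 - z (t 1) = -(z (t 1) - z (t 0) - (t 1 - t 0) • z' (t 0)) := by
          rw [hzh1 hMpos, hzh0, huz (t 0) hmem0]
          module
        have hb : ‖zh 1 - z (t 1)‖ ≤ M₂ * (t 0 - t 1)^2 := by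
          rw [hiden1, norm_neg]
          have := higs_taylor1 hz hz' hM2b hmem0 hmem1
          rwa [show |t 1 - t 0| = t 0 - t 1 by
            rw [abs_of_nonpos (by linarith), neg_sub],
            show (t 0 - t 1)^2 = (t 0 - t 1)^2 from rfl] at this
        refine hb.trans ?_
        have hS : 0 ≤ t 0 - t 1 := by linarith
        have he : 1 ≤ Real.exp (c * (t 0 - t 1)) := Real.one_le_exp (mul_nonneg hc0 hS)
        have hsq : (t 0 - t 1)^2 ≤ h^2 :=
          pow_le_pow_left₀ (by linarith) (hstepb 0 hMpos) 2
        have b1 : M₂ * (t 0 - t 1)^2 ≤ M₂ * h^2 := mul_le_mul_of_nonneg_left hsq hM₂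
        have b2 : M₂ * h^2 ≤ (M₂ + K * (t 0 - t 1)) * h^2 :=
          mul_le_mul_of_nonneg_right (by linarith [mul_nonneg hK0 hS]) (sq_nonneg h)
        have b3 : (M₂ + K * (t 0 - t 1)) * h^2
            ≤ (M₂ + K * (t 0 - t 1)) * h^2 * Real.exp (c * (t 0 - t 1)) :=
          le_mul_of_one_le_right
            (mul_nonneg (by linarith [mul_nonneg hK0 hS]) (sq_nonneg h)) he
        have b4 : (M₂ + K * (t 0 - t 1)) * h^2 * Real.exp (c * (t 0 - t 1))
            = (M₂ + K * (t 0 - t 1)) * Real.exp (c * (t 0 - t 1)) * h^2 := by ring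
        linarith
      | (j+2), ih =>
        have hj1M : j + 1 < M := by omega
        have hjM : j + 1 ≤ M := by omega
        have ih1 := ih (j+1) (by omega) hjM
        have ih0 := ih j (by omega) (by omega)
        have hd : t (j+2) < t (j+1) := hdec (j+1) hj1M
        have htj : t (j+1) ≤ t j := tmono j (j+1) (by omega) hjM
        have ht0j1 : 0 ≤ t 0 - t (j+1) := by linarith [tmono 0 (j+1) (Nat.zero_le _) hjM]
        have ht0j2 : 0 ≤ t 0 - t (j+2) := by linarith
        -- monotonicity of the bound
        have hmono : (M₂ + K * (t 0 - t j)) * Real.exp (c * (t 0 - t j)) * h^2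
            ≤ (M₂ + K * (t 0 - t (j+1))) * Real.exp (c * (t 0 - t (j+1))) * h^2 := by
          have h0j : 0 ≤ t 0 - t j := by linarith [tmono 0 j (Nat.zero_le _) (by omega : j ≤ M)]
          have h1' : M₂ + K * (t 0 - t j) ≤ M₂ + K * (t 0 - t (j+1)) := by
            have := mul_le_mul_of_nonneg_left (by linarith : t 0 - t j ≤ t 0 - t (j+1)) hK0
            linarith
          have h2' : Real.exp (c * (t 0 - t j)) ≤ Real.exp (c * (t 0 - t (j+1))) :=
            Real.exp_le_exp.2 (mul_le_mul_of_nonneg_left (by linarith) hc0)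
          exact mul_le_mul_of_nonneg_right
            (mul_le_mul h1' h2' (Real.exp_nonneg _)
              (add_nonneg hM₂ (mul_nonneg hK0 ht0j1))) (sq_nonneg h)
        have hstep' := step (j+1) (by omega) hj1M
        simp only [Nat.add_sub_cancel] at hstep'
        have hmax : max ‖zh (j+1) - z (t (j+1))‖ ‖zh j - z (t j)‖
            ≤ (M₂ + K * (t 0 - t (j+1))) * Real.exp (c * (t 0 - t (j+1))) * h^2 :=
          max_le ih1 (ih0.trans hmono)
        have hkpos : 0 < t (j+1) - t (j+2) := by linarith
        have hP0 : 0 ≤ M₂ + K * (t 0 - t (j+1)) := add_nonneg hM₂ (mul_nonneg hK0 ht0j1)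
        have hB0 : 0 ≤ (M₂ + K * (t 0 - t (j+1))) * Real.exp (c * (t 0 - t (j+1))) * h^2 :=
          mul_nonneg (mul_nonneg hP0 (Real.exp_nonneg _)) (sq_nonneg h)
        have hexpadd : Real.exp (c * (t 0 - t (j+1))) * Real.exp (c * (t (j+1) - t (j+2)))
            = Real.exp (c * (t 0 - t (j+2))) := by
          rw [← Real.exp_add]; congr 1; ring
        have hexp1 : 1 ≤ Real.exp (c * (t 0 - t (j+2))) :=
          Real.one_le_exp (mul_nonneg hc0 ht0j2)
        have hck0 : 0 ≤ c * (t (j+1) - t (j+2)) := mul_nonneg hc0 hkpos.le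
        have he2 : 1 + c * (t (j+1) - t (j+2)) ≤ Real.exp (c * (t (j+1) - t (j+2))) := by
          linarith [Real.add_one_le_exp (c * (t (j+1) - t (j+2)))]
        calc ‖zh (j+2) - z (t (j+2))‖
            ≤ (1 + c * (t (j+1) - t (j+2))) * max ‖zh (j+1) - z (t (j+1))‖ ‖zh j - z (t j)‖
              + K * h^2 * (t (j+1) - t (j+2)) := hstep'
          _ ≤ (1 + c * (t (j+1) - t (j+2))) *
                ((M₂ + K * (t 0 - t (j+1))) * Real.exp (c * (t 0 - t (j+1))) * h^2)
              + K * h^2 * (t (j+1) - t (j+2)) := by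
              have := mul_le_mul_of_nonneg_left hmax (by linarith : (0:ℝ) ≤ 1 + c * (t (j+1) - t (j+2)))
              linarith
          _ ≤ Real.exp (c * (t (j+1) - t (j+2))) *
                ((M₂ + K * (t 0 - t (j+1))) * Real.exp (c * (t 0 - t (j+1))) * h^2)
              + K * h^2 * (t (j+1) - t (j+2)) := by
              have := mul_le_mul_of_nonneg_right he2 hB0
              linarith
          _ = (M₂ + K * (t 0 - t (j+1))) * Real.exp (c * (t 0 - t (j+2))) * h^2
              + K * h^2 * (t (j+1) - t (j+2)) := by
              rw [← hexpadd]; ring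
          _ ≤ (M₂ + K * (t 0 - t (j+1))) * Real.exp (c * (t 0 - t (j+2))) * h^2
              + K * h^2 * (t (j+1) - t (j+2)) * Real.exp (c * (t 0 - t (j+2))) := by
              have h5 : 0 ≤ K * h^2 * (t (j+1) - t (j+2)) :=
                mul_nonneg (mul_nonneg hK0 (sq_nonneg h)) hkpos.le
              have := le_mul_of_one_le_right h5 hexp1
              linarith
          _ = (M₂ + K * (t 0 - t (j+2))) * Real.exp (c * (t 0 - t (j+2))) * h^2 := by
              ring_nf
  -- conclude
  intro k hkM
  refine (key k hkM).trans ?_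
  have hSk : 0 ≤ t 0 - t k := by linarith [tmono 0 k (Nat.zero_le _) hkM]
  have hSkT : t 0 - t k ≤ T' := by
    have := tmono k M hkM le_rfl
    have h1 : t 0 - t k ≤ t 0 - t M := by linarith
    exact h1.trans (le_trans hT (le_max_left T 0))
  have h1' : M₂ + K * (t 0 - t k) ≤ M₂ + K * T' := by
    have := mul_le_mul_of_nonneg_left hSkT hK0
    linarith
  have h2' : Real.exp (c * (t 0 - t k)) ≤ Real.exp (c * T') :=
    Real.exp_le_exp.2 (mul_le_mul_of_nonneg_left hSkT hc0)
  exact mul_le_mul_of_nonneg_right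
    (mul_le_mul h1' h2' (Real.exp_nonneg _)
      (add_nonneg hM₂ (mul_nonneg hK0 hT'0))) (sq_nonneg h)
end
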